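/- Let C be a symmetric n×n real matrix, S ⊆ {1,…,n} with 1 ∈ S, and p ≥ 0 an integer, and consider feasible solutions of the balanced 2-period TSP instance (C, S, p) in which the first tour, started at node 1, visits its remaining nodes in increasing index order and the second tour, started at node 1, visits its remaining nodes in decreasing index order (pyramidal-structured solutions). Then the minimum total cost over all such pyramidal-structured feasible solutions equals min{ c_{12} + V(2, 1, 1), c_{21} + V(1, 2, 2) } if 2 ∉ S, and equals c_{12} + c_{21} + V(2, 2, 2) if 2 ∈ S, where V is the semantically defined dynamic-programming value function from the context (and where a value of +∞ indicates that no such feasible solution exists). -/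

import Mathlib

/-- Length of a walk along a list of nodes (sum of consecutive edge costs). -/
def pathLen (C : ℕ → ℕ → ℝ) : List ℕ → ℝ
  | [] => 0
  | [_] => 0
  | a :: b :: t => C a b + pathLen C (b :: t)

/-- Length of the closed tour visiting the nodes of `l` in order and
returning from the last node to the first one. -/
def tourLen (C : ℕ → ℕ → ℝ) (l : List ℕ) : ℝ :=
  pathLen C (l ++ l.take 1)

/-- `(A, B)` is a feasible completion from `(x, y)`:
`A ∪ B = {h+1,…,n}` and `A ∩ B = S ∩ {h+1,…,n}` where `h = max x y`. -/
def IsFeasCompl (n : ℕ) (S : Finset ℕ) (x y : ℕ) (A B : Finset ℕ) : Prop :=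
  A ∪ B = Finset.Icc (max x y + 1) n ∧ A ∩ B = S ∩ Finset.Icc (max x y + 1) n

/-- Length of the feasible completion `(A, B)` from `(x, y)`: the walk goes
from `x` through the elements of `A` in increasing order to node `1`, and
then from node `1` through the elements of `B` in decreasing order to `y`. -/
noncomputable def complLen (C : ℕ → ℕ → ℝ) (x y : ℕ) (A B : Finset ℕ) : ℝ :=
  pathLen C (x :: (A.sort (· ≤ ·) ++ [1])) +
    pathLen C (1 :: ((B.sort (· ≤ ·)).reverse ++ [y]))

/-- The semantically defined dynamic-programming value function `V(x, y, m)`: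
the minimum length over all feasible completions `(A, B)` from `(x, y)`
respecting the balance window `⌈(n+|S|−p)/2⌉ ≤ m + |B| ≤ ⌊(n+|S|+p)/2⌋`;
it is `+∞` if no such completion exists, or if `x ≠ y` and
`S ∩ {min(x,y)+1,…,max(x,y)} ≠ ∅`. -/
noncomputable def V (n : ℕ) (C : ℕ → ℕ → ℝ) (S : Finset ℕ) (p : ℕ)
    (x y : ℕ) (m : ℤ) : EReal :=
  if x ≠ y ∧ (S ∩ Finset.Icc (min x y + 1) (max x y)).Nonempty then ⊤
  else
    ⨅ AB : {AB : Finset ℕ × Finset ℕ //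
        IsFeasCompl n S x y AB.1 AB.2 ∧
        ⌈((n : ℚ) + S.card - p) / 2⌉ ≤ m + AB.2.card ∧
        m + AB.2.card ≤ ⌊((n : ℚ) + S.card + p) / 2⌋},
      ((complLen C x y AB.1.1 AB.1.2 : ℝ) : EReal)

/-- `(T₁, T₂)` is a feasible node allocation of the balanced 2-period TSP:
`T₁ ∪ T₂ = {1,…,n}`, `T₁ ∩ T₂ = S`, and `| |T₁| − |T₂| | ≤ p`. -/
def FeasPair (n : ℕ) (S : Finset ℕ) (p : ℕ) (T₁ T₂ : Finset ℕ) : Prop :=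
  T₁ ∪ T₂ = Finset.Icc 1 n ∧ T₁ ∩ T₂ = S ∧
    |(T₁.card : ℤ) - (T₂.card : ℤ)| ≤ (p : ℤ)

/-- Total cost of the pyramidal-structured feasible solution on `(T₁, T₂)`:
the first tour visits `T₁` in increasing order (starting at node `1`),
the second tour visits `T₂` in decreasing order (ending at node `1`). -/
noncomputable def pyramidalCost (C : ℕ → ℕ → ℝ) (T₁ T₂ : Finset ℕ) : ℝ :=
  tourLen C (T₁.sort (· ≤ ·)) + tourLen C ((T₂.sort (· ≤ ·)).reverse)

/-!
Cut both tours of a pyramidal solution after node 2. Since `1 ∈ S`, the first tour starts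
`1, …, x` and the second ends `y, …, 1` with `(x, y) = (2, 2)` if `2 ∈ S` and `(x, y) = (2, 1)`
or `(1, 2)` otherwise, and the remaining nodes `(A, B)` range exactly over the feasible
completions from `(x, y)`: filtering by `· ≤ 2` splits the covering and intersection conditions
into a trivial part on `{1, 2}` and the completion conditions on `{3, …, n}`, while
`|T₁| + |T₂| = n + |S|` turns the balance condition into the window for `|T₂| = y + |B|`.
The cost splits accordingly: the first tour is `1 → ⋯ → x`, then `x → A ↑ → 1`; the second tour,
read from its last node `1`, is `1 → B ↓ → y`, then `y → ⋯ → 1`.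
-/

open Finset

lemma EReal.coe_add_iInf {ι : Sort*} (c : ℝ) (f : ι → EReal) :
    (c : EReal) + ⨅ i, f i = ⨅ i, ((c : EReal) + f i) :=
  Monotone.map_iInf_of_continuousAt
    ((EReal.continuousAt_add (Or.inl (EReal.coe_ne_top c)) (Or.inl (EReal.coe_ne_bot c))).comp
      (continuous_const.prodMk continuous_id).continuousAt)
    (fun _ _ h => add_le_add_right h _) (EReal.coe_add_top c)

lemma abs_sub_le_iff_mem_window {t₁ t₂ : ℤ} {a b p : ℕ} (hsum : t₁ + t₂ = a + b) :
    |t₁ - t₂| ≤ p ↔ ⌈((a : ℚ) + b - p) / 2⌉ ≤ t₂ ∧ t₂ ≤ ⌊((a : ℚ) + b + p) / 2⌋ := by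
  rw [abs_le, Int.ceil_le, Int.le_floor]
  qify at hsum ⊢
  constructor <;> rintro ⟨h₁, h₂⟩ <;> constructor <;> linarith

lemma eq_iff_filter_eq_and_filter_not_eq {α : Type*} [DecidableEq α] (q : α → Prop)
    [DecidablePred q] {X Y : Finset α} :
    X = Y ↔ X.filter q = Y.filter q ∧ X.filter (fun a => ¬ q a) = Y.filter (fun a => ¬ q a) := by
  refine ⟨fun h => h ▸ ⟨rfl, rfl⟩, fun ⟨h₁, h₂⟩ => ?_⟩
  rw [← filter_union_filter_not_eq q X, h₁, h₂, filter_union_filter_not_eq]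

lemma card_add_card_of_union_inter {T₁ T₂ S : Finset ℕ} {n : ℕ} (hu : T₁ ∪ T₂ = Icc 1 n)
    (hi : T₁ ∩ T₂ = S) : (T₁.card : ℤ) + T₂.card = n + S.card := by
  have h := card_union_add_card_inter T₁ T₂
  rw [hu, hi, Nat.card_Icc, Nat.add_sub_cancel] at h
  exact_mod_cast h.symm

section Layers

variable {h z : ℕ} {Z : Finset ℕ}

lemma filter_le_Icc_union (hz : z ≤ h) (hZ : ∀ a ∈ Z, h < a) :
    (Icc 1 z ∪ Z).filter (· ≤ h) = Icc 1 z := by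
  ext k
  simp only [mem_filter, mem_union, mem_Icc]
  constructor
  · rintro ⟨hk | hk, hkh⟩
    · exact hk
    · exact absurd (hZ k hk) (not_lt.2 hkh)
  · rintro hk
    exact ⟨Or.inl hk, hk.2.trans hz⟩

lemma filter_not_le_Icc_union (hz : z ≤ h) (hZ : ∀ a ∈ Z, h < a) :
    (Icc 1 z ∪ Z).filter (fun k => ¬ k ≤ h) = Z := by
  ext k
  simp only [mem_filter, mem_union, mem_Icc]
  constructor
  · rintro ⟨hk | hk, hkh⟩
    · exact absurd (hk.2.trans hz) hkh
    · exact hk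
  · rintro hk
    exact ⟨Or.inr hk, not_le.2 (hZ k hk)⟩

lemma eq_Icc_union_filter {T : Finset ℕ} (hT : T.filter (· ≤ h) = Icc 1 z) :
    T = Icc 1 z ∪ T.filter (fun k => ¬ k ≤ h) := by
  rw [← hT, filter_union_filter_not_eq]

end Layers

section Walks

variable (C : ℕ → ℕ → ℝ)

lemma pathLen_append_cons (l r : List ℕ) (x : ℕ) :
    pathLen C (l ++ x :: r) = pathLen C (l ++ [x]) + pathLen C (x :: r) := by
  induction l with
  | nil => simp [pathLen]
  | cons a l ih =>
    cases l with
    | nil => simp [pathLen]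
    | cons b l =>
      simp only [List.cons_append, pathLen] at ih ⊢
      rw [ih, add_assoc]

lemma tourLen_cons (x : ℕ) (l : List ℕ) : tourLen C (x :: l) = pathLen C (x :: (l ++ [x])) := rfl

lemma tourLen_append_singleton (l : List ℕ) (x : ℕ) :
    tourLen C (l ++ [x]) = tourLen C (x :: l) := by
  cases l with
  | nil => rfl
  | cons a l =>
    rw [List.cons_append, tourLen_cons, tourLen_cons,
      show a :: (l ++ [x] ++ [a]) = (a :: l) ++ [x, a] by simp, pathLen_append_cons]
    simp only [pathLen, List.cons_append]
    ring

lemma sort_Icc_union {x : ℕ} {A : Finset ℕ} (hA : ∀ a ∈ A, x < a) :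
    (Icc 1 x ∪ A).sort (· ≤ ·) = List.range' 1 x ++ A.sort (· ≤ ·) := by
  have hcross : ∀ a ∈ List.range' 1 x, ∀ b ∈ A.sort (· ≤ ·), a < b := by
    intro a ha b hb
    rw [List.mem_range'_1] at ha
    have := hA b ((mem_sort _).1 hb)
    omega
  have hnodup : (List.range' 1 x ++ A.sort (· ≤ ·)).Nodup :=
    List.nodup_append.2 ⟨List.nodup_range', sort_nodup _ _,
      fun a ha b hb => (hcross a ha b hb).ne⟩
  have hsorted : (List.range' 1 x ++ A.sort (· ≤ ·)).Pairwise (· ≤ ·) :=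
    List.pairwise_append.2 ⟨(List.pairwise_lt_range' ..).imp le_of_lt, pairwise_sort _ _,
      fun a ha b hb => (hcross a ha b hb).le⟩
  rw [← (List.toFinset_sort _ hnodup).2 hsorted]
  congr 1
  ext k
  simp [Nat.lt_one_add_iff]

lemma tourLen_range'_append (k : ℕ) (L : List ℕ) :
    tourLen C (List.range' 1 (k + 1) ++ L) =
      pathLen C (List.range' 1 (k + 1)) + pathLen C ((k + 1) :: (L ++ [1])) := by
  have hsucc : List.range' 1 (k + 1) = 1 :: List.range' 2 k := List.range'_succ
  have hconcat : List.range' 1 (k + 1) = List.range' 1 k ++ [k + 1] := by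
    rw [List.range'_1_concat, add_comm]
  rw [hsucc, List.cons_append, tourLen_cons, List.append_assoc, ← List.cons_append, ← hsucc,
    hconcat, List.append_assoc, List.singleton_append, pathLen_append_cons]

lemma tourLen_reverse_range'_append (k : ℕ) (L : List ℕ) :
    tourLen C (List.range' 1 (k + 1) ++ L).reverse =
      pathLen C (1 :: (L.reverse ++ [k + 1])) + pathLen C (List.range' 1 (k + 1)).reverse := by
  have hrev : (List.range' 1 (k + 1)).reverse = (k + 1) :: (List.range' 1 k).reverse := by
    rw [List.range'_1_concat, List.reverse_append, add_comm]; rfl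
  have hrev' : (List.range' 1 (k + 1)).reverse = (List.range' 2 k).reverse ++ [1] := by
    rw [List.range'_succ, List.reverse_cons]
  rw [List.reverse_append, hrev', ← List.append_assoc, tourLen_append_singleton, tourLen_cons,
    List.append_assoc, ← hrev', hrev, ← List.cons_append, pathLen_append_cons]
  rfl

lemma pyramidalCost_Icc_union {x y : ℕ} {A B : Finset ℕ} (hx : 1 ≤ x) (hy : 1 ≤ y)
    (hA : ∀ a ∈ A, x < a) (hB : ∀ b ∈ B, y < b) :
    pyramidalCost C (Icc 1 x ∪ A) (Icc 1 y ∪ B) =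
      pathLen C (List.range' 1 x) + pathLen C (List.range' 1 y).reverse +
        complLen C x y A B := by
  obtain ⟨k, rfl⟩ := Nat.exists_eq_add_of_le' hx
  obtain ⟨l, rfl⟩ := Nat.exists_eq_add_of_le' hy
  rw [pyramidalCost, sort_Icc_union hA, sort_Icc_union hB, tourLen_range'_append,
    tourLen_reverse_range'_append, complLen]
  ring

end Walks

def complSet (n : ℕ) (S : Finset ℕ) (p x y : ℕ) (m : ℤ) : Set (Finset ℕ × Finset ℕ) :=
  {AB | IsFeasCompl n S x y AB.1 AB.2 ∧
    ⌈((n : ℚ) + S.card - p) / 2⌉ ≤ m + AB.2.card ∧ m + AB.2.card ≤ ⌊((n : ℚ) + S.card + p) / 2⌋}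

/-- The node sets of the pyramidal solution whose first tour begins `1, …, x` and whose second
tour ends `y, …, 1`, the remaining nodes being `A` and `B`. -/
def withPrefixes (x y : ℕ) (AB : Finset ℕ × Finset ℕ) : Finset ℕ × Finset ℕ :=
  (Icc 1 x ∪ AB.1, Icc 1 y ∪ AB.2)

section Correspondence

variable {n p x y : ℕ} {S : Finset ℕ}

lemma V_eq_biInf (C : ℕ → ℕ → ℝ) (m : ℤ)
    (hguard : ¬(x ≠ y ∧ (S ∩ Icc (min x y + 1) (max x y)).Nonempty)) :
    V n C S p x y m = ⨅ AB ∈ complSet n S p x y m, (complLen C x y AB.1 AB.2 : EReal) := by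
  rw [V, if_neg hguard]
  exact iInf_subtype'' (complSet n S p x y m) fun AB => (complLen C x y AB.1 AB.2 : EReal)

lemma max_lt_of_mem_complSet {m : ℤ} {AB : Finset ℕ × Finset ℕ} (hAB : AB ∈ complSet n S p x y m) :
    (∀ a ∈ AB.1, max x y < a) ∧ ∀ b ∈ AB.2, max x y < b := by
  have hmem : ∀ k ∈ AB.1 ∪ AB.2, max x y < k := fun k hk => by
    rw [hAB.1.1, mem_Icc] at hk
    exact hk.1
  exact ⟨fun a ha => hmem a (mem_union_left _ ha), fun b hb => hmem b (mem_union_right _ hb)⟩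

lemma union_eq_Icc_and_inter_eq_iff_isFeasCompl (hS : S ⊆ Icc 1 n) (hxy : max x y ≤ n)
    (hSlow : S.filter (· ≤ max x y) = Icc 1 (min x y)) {A B : Finset ℕ}
    (hA : ∀ a ∈ A, max x y < a) (hB : ∀ b ∈ B, max x y < b) :
    (Icc 1 x ∪ A ∪ (Icc 1 y ∪ B) = Icc 1 n ∧ (Icc 1 x ∪ A) ∩ (Icc 1 y ∪ B) = S) ↔
      IsFeasCompl n S x y A B := by
  rw [IsFeasCompl]
  set h := max x y
  have hx : x ≤ h := le_max_left x y
  have hy : y ≤ h := le_max_right x y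
  have hn_low : (Icc 1 n).filter (· ≤ h) = Icc 1 h := by
    ext k
    simp only [mem_filter, mem_Icc]
    omega
  have hn_high : (Icc 1 n).filter (fun k => ¬ k ≤ h) = Icc (h + 1) n := by
    ext k
    simp only [mem_filter, mem_Icc]
    omega
  have hS_high : S.filter (fun k => ¬ k ≤ h) = S ∩ Icc (h + 1) n := by
    ext k
    simp only [mem_filter, mem_inter, mem_Icc]
    constructor
    · rintro ⟨hk, hkh⟩
      exact ⟨hk, by omega, (mem_Icc.1 (hS hk)).2⟩
    · rintro ⟨hk, hkh, -⟩
      exact ⟨hk, by omega⟩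
  have hU : Icc 1 x ∪ Icc 1 y = Icc 1 h := by
    ext k
    simp only [mem_union, mem_Icc]
    omega
  have hI : Icc 1 x ∩ Icc 1 y = Icc 1 (min x y) := by
    ext k
    simp only [mem_inter, mem_Icc]
    omega
  rw [eq_iff_filter_eq_and_filter_not_eq (· ≤ h),
    eq_iff_filter_eq_and_filter_not_eq (· ≤ h) (X := _ ∩ _)]
  simp only [filter_union, filter_inter_distrib, filter_le_Icc_union hx hA,
    filter_le_Icc_union hy hB, filter_not_le_Icc_union hx hA, filter_not_le_Icc_union hy hB,
    hn_low, hn_high, hU, hSlow, hS_high, hI, true_and]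

lemma feasPair_Icc_union_iff (hS : S ⊆ Icc 1 n) (hxy : max x y ≤ n)
    (hSlow : S.filter (· ≤ max x y) = Icc 1 (min x y)) {A B : Finset ℕ}
    (hA : ∀ a ∈ A, max x y < a) (hB : ∀ b ∈ B, max x y < b) :
    FeasPair n S p (Icc 1 x ∪ A) (Icc 1 y ∪ B) ↔ (A, B) ∈ complSet n S p x y y := by
  have hcard : ((Icc 1 y ∪ B).card : ℤ) = y + B.card := by
    rw [card_union_of_disjoint, Nat.card_Icc, Nat.add_sub_cancel, Nat.cast_add]
    exact disjoint_left.2 fun k hk hkB => by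
      have := hB k hkB
      rw [mem_Icc] at hk
      omega
  have hcompl := union_eq_Icc_and_inter_eq_iff_isFeasCompl hS hxy hSlow hA hB
  constructor
  · rintro ⟨hu, hi, hbal⟩
    rw [abs_sub_le_iff_mem_window (card_add_card_of_union_inter hu hi), hcard] at hbal
    exact ⟨hcompl.1 ⟨hu, hi⟩, hbal⟩
  · rintro ⟨hAB, hbal⟩
    obtain ⟨hu, hi⟩ := hcompl.2 hAB
    refine ⟨hu, hi, ?_⟩
    rwa [abs_sub_le_iff_mem_window (card_add_card_of_union_inter hu hi), hcard]

lemma setOf_feasPair_filter_eq_image {h : ℕ} {m : ℤ} (hh : max x y = h) (hm : m = y)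
    (hS : S ⊆ Icc 1 n) (hhn : h ≤ n) (hSlow : S.filter (· ≤ h) = Icc 1 (min x y)) :
    {TB : Finset ℕ × Finset ℕ | FeasPair n S p TB.1 TB.2 ∧
        TB.1.filter (· ≤ h) = Icc 1 x ∧ TB.2.filter (· ≤ h) = Icc 1 y} =
      withPrefixes x y '' complSet n S p x y m := by
  subst hh hm
  ext ⟨T₁, T₂⟩
  constructor
  · rintro ⟨hT, h₁, h₂⟩
    rw [eq_Icc_union_filter h₁, eq_Icc_union_filter h₂] at hT
    refine ⟨_, (feasPair_Icc_union_iff hS hhn hSlow ?_ ?_).1 hT, ?_⟩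
    · exact fun a ha => not_le.1 (mem_filter.1 ha).2
    · exact fun b hb => not_le.1 (mem_filter.1 hb).2
    · rw [withPrefixes, ← eq_Icc_union_filter h₁, ← eq_Icc_union_filter h₂]
  · rintro ⟨⟨A, B⟩, hAB, hTB⟩
    obtain ⟨hA, hB⟩ := max_lt_of_mem_complSet hAB
    rw [withPrefixes, Prod.mk.injEq] at hTB
    obtain ⟨rfl, rfl⟩ := hTB
    exact ⟨(feasPair_Icc_union_iff hS hhn hSlow hA hB).2 hAB,
      filter_le_Icc_union (le_max_left x y) hA, filter_le_Icc_union (le_max_right x y) hB⟩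

lemma biInf_image_withPrefixes (C : ℕ → ℕ → ℝ) (m : ℤ) (hx : 1 ≤ x) (hy : 1 ≤ y)
    (hguard : ¬(x ≠ y ∧ (S ∩ Icc (min x y + 1) (max x y)).Nonempty)) :
    ⨅ TB ∈ withPrefixes x y '' complSet n S p x y m, (pyramidalCost C TB.1 TB.2 : EReal) =
      ((pathLen C (List.range' 1 x) + pathLen C (List.range' 1 y).reverse : ℝ) : EReal) +
        V n C S p x y m := by
  rw [iInf_image, V_eq_biInf C m hguard, EReal.coe_add_iInf]
  refine iInf_congr fun AB => ?_
  rw [EReal.coe_add_iInf]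
  refine iInf_congr fun hAB => ?_
  obtain ⟨hA, hB⟩ := max_lt_of_mem_complSet hAB
  rw [withPrefixes, pyramidalCost_Icc_union C hx hy
    (fun a ha => (le_max_left x y).trans_lt (hA a ha))
    (fun b hb => (le_max_right x y).trans_lt (hB b hb)), EReal.coe_add]

lemma filter_le_two_eq_Icc {T : Finset ℕ} (h1 : 1 ∈ T) (hT : ∀ k ∈ T, 1 ≤ k) :
    T.filter (· ≤ 2) = Icc 1 (if 2 ∈ T then 2 else 1) := by
  ext k
  simp only [mem_filter, mem_Icc]
  constructor
  · rintro ⟨hk, hk2⟩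
    have := hT k hk
    interval_cases k
    · split_ifs <;> simp
    · simp [hk]
  · rintro ⟨hk1, hk⟩
    split_ifs at hk with h2
    · interval_cases k
      · exact ⟨h1, by norm_num⟩
      · exact ⟨h2, le_rfl⟩
    · obtain rfl : k = 1 := by omega
      exact ⟨h1, by norm_num⟩

lemma filter_le_two_of_feasPair (h1S : 1 ∈ S) {T₁ T₂ : Finset ℕ}
    (hT : FeasPair n S p T₁ T₂) :
    T₁.filter (· ≤ 2) = Icc 1 (if 2 ∈ T₁ then 2 else 1) ∧
      T₂.filter (· ≤ 2) = Icc 1 (if 2 ∈ T₂ then 2 else 1) := by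
  obtain ⟨hu, hi, -⟩ := hT
  have h1 := hi ▸ h1S
  have hpos : ∀ k ∈ T₁ ∪ T₂, 1 ≤ k := fun k hk => (mem_Icc.1 (hu ▸ hk)).1
  exact ⟨filter_le_two_eq_Icc (mem_inter.1 h1).1 fun k hk => hpos k (mem_union_left _ hk),
    filter_le_two_eq_Icc (mem_inter.1 h1).2 fun k hk => hpos k (mem_union_right _ hk)⟩

lemma setOf_feasPair_eq_of_two_mem (hn : 2 ≤ n) (hS : S ⊆ Icc 1 n) (h1S : 1 ∈ S) (h2S : 2 ∈ S) :
    {TB : Finset ℕ × Finset ℕ | FeasPair n S p TB.1 TB.2} =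
      withPrefixes 2 2 '' complSet n S p 2 2 2 := by
  have hSlow := filter_le_two_eq_Icc h1S fun k hk => (mem_Icc.1 (hS hk)).1
  rw [if_pos h2S] at hSlow
  rw [← setOf_feasPair_filter_eq_image (x := 2) (y := 2) (m := 2) rfl rfl hS hn hSlow]
  ext ⟨T₁, T₂⟩
  refine ⟨fun hT => ⟨hT, ?_⟩, fun hT => hT.1⟩
  have h2 := mem_inter.1 (hT.2.1 ▸ h2S)
  simpa [h2.1, h2.2] using filter_le_two_of_feasPair h1S hT

lemma setOf_feasPair_eq_of_two_not_mem (hn : 2 ≤ n) (hS : S ⊆ Icc 1 n) (h1S : 1 ∈ S)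
    (h2S : 2 ∉ S) :
    {TB : Finset ℕ × Finset ℕ | FeasPair n S p TB.1 TB.2} =
      withPrefixes 2 1 '' complSet n S p 2 1 1 ∪ withPrefixes 1 2 '' complSet n S p 1 2 2 := by
  have hSlow := filter_le_two_eq_Icc h1S fun k hk => (mem_Icc.1 (hS hk)).1
  rw [if_neg h2S] at hSlow
  rw [← setOf_feasPair_filter_eq_image (x := 2) (y := 1) (m := 1) rfl rfl hS hn hSlow,
    ← setOf_feasPair_filter_eq_image (x := 1) (y := 2) (m := 2) rfl rfl hS hn hSlow,
    ← Set.ofPred_or]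
  ext ⟨T₁, T₂⟩
  simp only [Set.mem_ofPred_eq]
  refine ⟨fun hT => ?_, by rintro (⟨hT, -⟩ | ⟨hT, -⟩) <;> exact hT⟩
  obtain ⟨h₁, h₂⟩ := filter_le_two_of_feasPair h1S hT
  have h2 : 2 ∈ T₁ ∪ T₂ := hT.1 ▸ mem_Icc.2 ⟨one_le_two, hn⟩
  by_cases h2T₁ : 2 ∈ T₁
  · have h2T₂ : 2 ∉ T₂ := fun h2T₂ => h2S (hT.2.1 ▸ mem_inter.2 ⟨h2T₁, h2T₂⟩)
    exact Or.inl ⟨hT, by simpa [h2T₁] using h₁, by simpa [h2T₂] using h₂⟩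
  · have h2T₂ : 2 ∈ T₂ := (mem_union.1 h2).resolve_left h2T₁
    exact Or.inr ⟨hT, by simpa [h2T₁] using h₁, by simpa [h2T₂] using h₂⟩

end Correspondence

theorem dp_value_of_optimal_pyramidal_solution_general
    (n : ℕ) (hn : 2 ≤ n) (C : ℕ → ℕ → ℝ)
    (S : Finset ℕ) (hS : S ⊆ Finset.Icc 1 n) (h1S : 1 ∈ S) (p : ℕ) :
    (⨅ TB : {TB : Finset ℕ × Finset ℕ // FeasPair n S p TB.1 TB.2},
        ((pyramidalCost C TB.1.1 TB.1.2 : ℝ) : EReal)) =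
      if 2 ∈ S then
        ((C 1 2 + C 2 1 : ℝ) : EReal) + V n C S p 2 2 2
      else
        min (((C 1 2 : ℝ) : EReal) + V n C S p 2 1 1)
          (((C 2 1 : ℝ) : EReal) + V n C S p 1 2 2) := by
  refine (iInf_subtype'' {TB : Finset ℕ × Finset ℕ | FeasPair n S p TB.1 TB.2}
    fun TB => ((pyramidalCost C TB.1 TB.2 : ℝ) : EReal)).trans ?_
  split_ifs with h2S
  · rw [setOf_feasPair_eq_of_two_mem hn hS h1S h2S,
      biInf_image_withPrefixes C 2 one_le_two one_le_two (by simp)]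
    simp [List.range', pathLen]
  · rw [setOf_feasPair_eq_of_two_not_mem hn hS h1S h2S, _root_.iInf_union,
      biInf_image_withPrefixes C 1 one_le_two le_rfl (by simp [inter_singleton_of_notMem h2S]),
      biInf_image_withPrefixes C 2 le_rfl one_le_two (by simp [inter_singleton_of_notMem h2S])]
    simp [List.range', pathLen]

theorem dp_value_of_optimal_pyramidal_solution
    (n : ℕ) (hn : 2 ≤ n) (C : ℕ → ℕ → ℝ) (hsym : ∀ i j, C i j = C j i)
    (S : Finset ℕ) (hS : S ⊆ Finset.Icc 1 n) (h1S : 1 ∈ S) (p : ℕ) :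
    (⨅ TB : {TB : Finset ℕ × Finset ℕ // FeasPair n S p TB.1 TB.2},
        ((pyramidalCost C TB.1.1 TB.1.2 : ℝ) : EReal)) =
      if 2 ∈ S then
        ((C 1 2 + C 2 1 : ℝ) : EReal) + V n C S p 2 2 2
      else
        min (((C 1 2 : ℝ) : EReal) + V n C S p 2 1 1)
          (((C 2 1 : ℝ) : EReal) + V n C S p 1 2 2) :=
  dp_value_of_optimal_pyramidal_solution_general n hn C S hS h1S p
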